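/- Let 𝕀 be the category whose objects are the natural numbers and whose morphisms m → n are the injective functions Fin m → Fin n, and let Σ be the subcategory with the same objects and with morphisms only the bijections (so Hom_Σ(n, n) = Perm(Fin n) and there are no morphisms between distinct objects). For σ ∈ Perm(Fin n), let σ⁺ ∈ Perm(Fin (n+1)) be the permutation acting as σ on the first n elements (via Fin.castSucc) and fixing the last element; for τ ∈ Perm(Fin k), let 1ₘ ⊕ τ ∈ Perm(Fin (m+k)) be the block-sum permutation acting (under the canonical equivalence Fin (m+k) ≃ Fin m ⊕ Fin k) as the identity on the first block and as τ on the second block. Define a category M whose objects are pairs (X, s) where X : Σ ⥤ TopCat is a functor and s = (sₙ : X(n) ⟶ X(n+1))_{n ≥ 0} is a family of morphisms satisfying: (a) sₙ ∘ X(σ) = X(σ⁺) ∘ sₙ for every n and every σ ∈ Perm(Fin n); and (b) X(1ₘ ⊕ τ) ∘ s⁽ᵏ⁾ = s⁽ᵏ⁾ for all m, k and every τ ∈ Perm(Fin k), where s⁽ᵏ⁾ : X(m) ⟶ X(m+k) denotes the composite s_{m+k−1} ∘ ⋯ ∘ s_m; and whose morphisms (X, s) → (Y, t) are natural transformations α :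 X ⟶ Y with α_{n+1} ∘ sₙ = tₙ ∘ αₙ for all n. Then the functor category (𝕀 ⥤ TopCat) is equivalent to M, via the functor sending Z : 𝕀 ⥤ TopCat to its restriction along Σ ⊆ 𝕀 together with the maps sₙ = Z(ιₙ) induced by the canonical inclusions ιₙ : n → n+1. -/

import Mathlib

open CategoryTheory

/-- The category `𝕀` with objects the natural numbers and morphisms `m ⟶ n`
the injective functions `Fin m → Fin n`. -/
def InjCat : Type := ℕ

/-- Regard a natural number as an object of `InjCat`. -/
def InjCat.of (n : ℕ) : InjCat := n

instance : Category InjCat where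
  Hom m n := {f : Fin m → Fin n // Function.Injective f}
  id _ := ⟨id, fun _ _ h => h⟩
  comp f g := ⟨g.1 ∘ f.1, g.2.comp f.2⟩
  id_comp _ := Subtype.ext rfl
  comp_id _ := Subtype.ext rfl
  assoc _ _ _ := Subtype.ext rfl

/-- The subcategory `Σ` with objects the natural numbers and morphisms `m ⟶ n`
the bijective functions `Fin m → Fin n`; so the only morphisms are the
permutations `Perm (Fin n) : n ⟶ n`, and there are no morphisms between
distinct objects. -/
def PermCat : Type := ℕ

/-- Regard a natural number as an object of `PermCat`. -/
def PermCat.of (n : ℕ) : PermCat := n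

instance : Category PermCat where
  Hom m n := {f : Fin m → Fin n // Function.Bijective f}
  id _ := ⟨id, Function.bijective_id⟩
  comp f g := ⟨g.1 ∘ f.1, g.2.comp f.2⟩
  id_comp _ := Subtype.ext rfl
  comp_id _ := Subtype.ext rfl
  assoc _ _ _ := Subtype.ext rfl

/-- The inclusion functor `Σ ⊆ 𝕀`. -/
def permToInj : PermCat ⥤ InjCat where
  obj n := n
  map f := ⟨f.1, f.2.injective⟩
  map_id _ := rfl
  map_comp _ _ := rfl

/-- A permutation of `Fin n`, as a morphism of `PermCat`. -/
def permHom {n : ℕ} (σ : Equiv.Perm (Fin n)) : PermCat.of n ⟶ PermCat.of n :=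
  ⟨σ, σ.bijective⟩

/-- The canonical inclusion `ιₙ : n ⟶ n + 1` of `InjCat`. -/
def iota (n : ℕ) : InjCat.of n ⟶ InjCat.of (n + 1) :=
  ⟨Fin.castSucc, Fin.castSucc_injective n⟩

/-- `σ⁺`: the permutation of `Fin (n+1)` acting as `σ` on the first `n` elements
(via `Fin.castSucc`) and fixing the last element. -/
def succPerm {n : ℕ} (σ : Equiv.Perm (Fin n)) : Equiv.Perm (Fin (n + 1)) :=
  finSumFinEquiv.permCongr (σ.sumCongr (Equiv.refl (Fin 1)))

/-- `1ₘ ⊕ τ`: the block-sum permutation of `Fin (m + k)` acting (under the canonical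
equivalence `Fin (m + k) ≃ Fin m ⊕ Fin k`) as the identity on the first block and as
`τ` on the second block. -/
def blockSum (m : ℕ) {k : ℕ} (τ : Equiv.Perm (Fin k)) : Equiv.Perm (Fin (m + k)) :=
  finSumFinEquiv.permCongr ((Equiv.refl (Fin m)).sumCongr τ)

universe u

/-- The iterated stabilization map `s⁽ᵏ⁾ = s_{m+k-1} ∘ ⋯ ∘ s_m : X(m) ⟶ X(m+k)`. -/
def iterMap (X : PermCat ⥤ TopCat.{u})
    (s : ∀ n : ℕ, X.obj (PermCat.of n) ⟶ X.obj (PermCat.of (n + 1))) (m : ℕ) :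
    ∀ k : ℕ, X.obj (PermCat.of m) ⟶ X.obj (PermCat.of (m + k))
  | 0 => 𝟙 _
  | k + 1 => iterMap X s m k ≫ s (m + k)

/-- An object of the category `M`: a functor `X : Σ ⥤ TopCat` together with
stabilization maps `sₙ : X(n) ⟶ X(n+1)` satisfying
(a) `sₙ ∘ X(σ) = X(σ⁺) ∘ sₙ` for every `n` and `σ ∈ Perm (Fin n)`, and
(b) `X(1ₘ ⊕ τ) ∘ s⁽ᵏ⁾ = s⁽ᵏ⁾` for all `m, k` and `τ ∈ Perm (Fin k)`. -/
structure MObj where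
  X : PermCat ⥤ TopCat.{u}
  s : ∀ n : ℕ, X.obj (PermCat.of n) ⟶ X.obj (PermCat.of (n + 1))
  perm_comm : ∀ (n : ℕ) (σ : Equiv.Perm (Fin n)),
    X.map (permHom σ) ≫ s n = s n ≫ X.map (permHom (succPerm σ))
  stab_inv : ∀ (m k : ℕ) (τ : Equiv.Perm (Fin k)),
    iterMap X s m k ≫ X.map (permHom (blockSum m τ)) = iterMap X s m k

/-- A morphism of `M`: a natural transformation `α : X ⟶ Y` commuting with the
stabilization maps, `α_{n+1} ∘ sₙ = tₙ ∘ αₙ`. -/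
@[ext]
structure MHom (A B : MObj.{u}) where
  α : A.X ⟶ B.X
  comm : ∀ n : ℕ,
    A.s n ≫ α.app (PermCat.of (n + 1)) = α.app (PermCat.of n) ≫ B.s n

instance : Category MObj.{u} where
  Hom := MHom
  id A := ⟨𝟙 A.X, fun n => by simp⟩
  comp f g := ⟨f.α ≫ g.α, fun n => by
    simp only [NatTrans.comp_app, ← Category.assoc, f.comm n]
    simp only [Category.assoc, g.comm n]⟩
  id_comp f := MHom.ext (Category.id_comp f.α)
  comp_id f := MHom.ext (Category.comp_id f.α)
  assoc f g h := MHom.ext (Category.assoc f.α g.α h.α)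


lemma succPerm_castSucc {n : ℕ} (σ : Equiv.Perm (Fin n)) (i : Fin n) :
    succPerm σ (Fin.castSucc i) = Fin.castSucc (σ i) := by
  have h : ∀ j : Fin n, Fin.castSucc j = finSumFinEquiv (Sum.inl j) := fun _ => rfl
  rw [succPerm, Equiv.permCongr_apply, h i, Equiv.symm_apply_apply, h (σ i)]
  rfl

lemma iota_comm {n : ℕ} (σ : Equiv.Perm (Fin n)) :
    permToInj.map (permHom σ) ≫ iota n = iota n ≫ permToInj.map (permHom (succPerm σ)) :=
  Subtype.ext (funext fun i => (succPerm_castSucc σ i).symm)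

/-- The canonical inclusion `m ⟶ m + k` of `InjCat`. -/
def iotaMany (m k : ℕ) : InjCat.of m ⟶ InjCat.of (m + k) :=
  ⟨Fin.castAdd k, Fin.castAdd_injective m k⟩

lemma iotaMany_zero (m : ℕ) : iotaMany m 0 = 𝟙 (InjCat.of m) :=
  Subtype.ext (funext fun _ => Fin.ext rfl)

lemma iotaMany_succ (m k : ℕ) :
    iotaMany m k ≫ iota (m + k) = iotaMany m (k + 1) :=
  Subtype.ext (funext fun _ => Fin.ext rfl)

lemma iterMap_restrict (Z : InjCat ⥤ TopCat.{u}) (m : ℕ) :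
    ∀ k : ℕ, iterMap (permToInj ⋙ Z) (fun n => Z.map (iota n)) m k = Z.map (iotaMany m k)
  | 0 => by
      rw [iterMap, iotaMany_zero, Z.map_id]
      rfl
  | k + 1 => by
      rw [iterMap, iterMap_restrict Z m k]
      exact (Z.map_comp _ _).symm.trans (congrArg Z.map (iotaMany_succ m k))

lemma blockSum_castAdd {m k : ℕ} (τ : Equiv.Perm (Fin k)) (i : Fin m) :
    blockSum m τ (Fin.castAdd k i) = Fin.castAdd k i := by
  have h : Fin.castAdd k i = finSumFinEquiv (Sum.inl i) := rfl
  rw [blockSum, Equiv.permCongr_apply, h, Equiv.symm_apply_apply]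
  rfl

lemma iotaMany_blockSum {m k : ℕ} (τ : Equiv.Perm (Fin k)) :
    iotaMany m k ≫ permToInj.map (permHom (blockSum m τ)) = iotaMany m k :=
  Subtype.ext (funext fun i => blockSum_castAdd τ i)

/-- The restriction functor from `𝕀 ⥤ TopCat` to `M`, sending `Z` to its restriction
along `Σ ⊆ 𝕀` together with the stabilization maps `sₙ = Z(ιₙ)` induced by the
canonical inclusions `ιₙ : n ⟶ n + 1`. -/
def restrictFunctor : (InjCat ⥤ TopCat.{u}) ⥤ MObj.{u} where
  obj Z :=
    { X := permToInj ⋙ Z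
      s := fun n => Z.map (iota n)
      perm_comm := fun n σ => by
        dsimp only [Functor.comp_map]
        exact (Z.map_comp _ _).symm.trans ((congrArg Z.map (iota_comm σ)).trans (Z.map_comp _ _))
      stab_inv := fun m k τ => by
        dsimp only [Functor.comp_map]
        rw [iterMap_restrict]
        exact (Z.map_comp _ _).symm.trans (congrArg Z.map (iotaMany_blockSum τ)) }
  map f :=
    { α := Functor.whiskerLeft permToInj f
      comm := fun n => f.naturality (iota n) }
  map_id _ := rfl
  map_comp _ _ := rfl

/-!
An injection `f : m → n` of `𝕀` factors as the canonical inclusion `m → n` followed by a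
permutation `σ` of `Fin n`, so an object `(X, s)` of `M` extends to `𝕀` by letting `f` act as
`X(σ) ∘ s_{n-1} ∘ ⋯ ∘ s_m`. Two choices of `σ` differ by a permutation `1ₘ ⊕ τ` fixing the first
`m` points, which acts trivially after stabilization by (b); functoriality follows by moving
permutations past stabilizations with (a). The same factorization shows that a morphism of `M`
between restrictions is natural for all injections, so restriction is fully faithful.
-/

open Equiv

lemma Fin.exists_perm_apply_castLE {m n : ℕ} (h : m ≤ n) {f : Fin m → Fin n}
    (hf : Function.Injective f) :
    ∃ σ : Perm (Fin n), ∀ i, σ (Fin.castLE h i) = f i := by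
  classical
  refine ⟨((ofInjective _ (Fin.castLE_injective h)).symm.trans (ofInjective f hf)).extendSubtype,
    fun i => ?_⟩
  rw [extendSubtype_apply_of_mem _ _ ⟨i, rfl⟩]
  simp

lemma exists_eq_blockSum_of_forall_castAdd {m k : ℕ} {π : Perm (Fin (m + k))}
    (hπ : ∀ i, π (Fin.castAdd k i) = Fin.castAdd k i) : ∃ τ, π = blockSum m τ := by
  let π' : Perm (Fin m ⊕ Fin k) := finSumFinEquiv.symm.permCongr π
  have hπ' : ∀ i, π' (Sum.inl i) = Sum.inl i := fun i => by simp [π', hπ]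
  obtain ⟨⟨σ, τ⟩, hστ⟩ := Perm.mem_sumCongrHom_range_of_perm_mapsTo_inl (σ := π')
    (by rintro _ ⟨i, rfl⟩; exact ⟨i, (hπ' i).symm⟩)
  have hσ : σ = 1 := Equiv.ext fun i => by simpa [← hστ] using hπ' i
  refine ⟨τ, ?_⟩
  change π = finSumFinEquiv.permCongr (Perm.sumCongrHom _ _ (1, τ))
  rw [← hσ, hστ]
  ext x
  simp [π']

lemma permHom_mul {n : ℕ} (σ τ : Perm (Fin n)) : permHom (σ * τ) = permHom τ ≫ permHom σ :=
  rfl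

lemma permHom_one (n : ℕ) : permHom (1 : Perm (Fin n)) = 𝟙 (PermCat.of n) :=
  rfl

namespace MObj

def isoMk {A B : MObj.{u}} (e : A.X ≅ B.X)
    (he : ∀ n, A.s n ≫ e.hom.app (PermCat.of (n + 1)) = e.hom.app (PermCat.of n) ≫ B.s n) :
    A ≅ B where
  hom := ⟨e.hom, he⟩
  inv := ⟨e.inv, fun n => by
    rw [← cancel_epi (e.hom.app _), ← Category.assoc, ← he, Category.assoc,
      Iso.hom_inv_id_app, Iso.hom_inv_id_app_assoc, Category.comp_id]⟩
  hom_inv_id := MHom.ext e.hom_inv_id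
  inv_hom_id := MHom.ext e.inv_hom_id

variable (A : MObj.{u})

def stab {m n : ℕ} (h : m ≤ n) : A.X.obj (PermCat.of m) ⟶ A.X.obj (PermCat.of n) :=
  (Functor.ofSequence A.s).map (homOfLE h)

lemma stab_refl (m : ℕ) : A.stab le_rfl = 𝟙 (A.X.obj (PermCat.of m)) :=
  (Functor.ofSequence A.s).map_id m

lemma stab_comp_stab {l m n : ℕ} (h₁ : l ≤ m) (h₂ : m ≤ n) :
    A.stab h₁ ≫ A.stab h₂ = A.stab (h₁.trans h₂) :=
  ((Functor.ofSequence A.s).map_comp _ _).symm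

lemma stab_succ (n : ℕ) : A.stab (Nat.le_add_right n 1) = A.s n :=
  Functor.ofSequence_map_homOfLE_succ A.s n

lemma iterMap_eq_stab (m : ℕ) : ∀ k, iterMap A.X A.s m k = A.stab (Nat.le_add_right m k)
  | 0 => (A.stab_refl m).symm
  | k + 1 => by rw [iterMap, iterMap_eq_stab m k, ← stab_succ, stab_comp_stab]

lemma stab_comp_blockSum (m : ℕ) {k : ℕ} (τ : Perm (Fin k)) :
    A.stab (Nat.le_add_right m k) ≫ A.X.map (permHom (blockSum m τ)) =
      A.stab (Nat.le_add_right m k) := by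
  rw [← iterMap_eq_stab]
  exact A.stab_inv m k τ

lemma stab_comp_map_eq {m n : ℕ} (h : m ≤ n) {σ σ' : Perm (Fin n)}
    (hσ : ∀ i, σ (Fin.castLE h i) = σ' (Fin.castLE h i)) :
    A.stab h ≫ A.X.map (permHom σ) = A.stab h ≫ A.X.map (permHom σ') := by
  obtain ⟨k, rfl⟩ := Nat.exists_eq_add_of_le h
  obtain ⟨τ, hτ⟩ := exists_eq_blockSum_of_forall_castAdd (π := σ⁻¹ * σ') fun i => by
    rw [Perm.mul_apply, Perm.inv_eq_iff_eq]
    exact (hσ i).symm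
  rw [inv_mul_eq_iff_eq_mul.mp hτ, permHom_mul, A.X.map_comp, ← Category.assoc,
    stab_comp_blockSum]

lemma map_comp_stab {m n : ℕ} (h : m ≤ n) (σ : Perm (Fin m)) {ρ : Perm (Fin n)}
    (hρ : ∀ i, ρ (Fin.castLE h i) = Fin.castLE h (σ i)) :
    A.X.map (permHom σ) ≫ A.stab h = A.stab h ≫ A.X.map (permHom ρ) := by
  induction n, h using Nat.le_induction with
  | base =>
    obtain rfl : ρ = σ := Equiv.ext hρ
    rw [stab_refl, Category.comp_id, Category.id_comp]
  | succ n hmn ih =>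
    obtain ⟨ρ', hρ'⟩ := Fin.exists_perm_apply_castLE hmn
      ((Fin.castLE_injective hmn).comp σ.injective)
    rw [← A.stab_comp_stab hmn (Nat.le_add_right n 1), stab_succ, reassoc_of% ih hρ',
      A.perm_comm, ← Category.assoc, ← stab_succ, stab_comp_stab]
    refine A.stab_comp_map_eq _ fun i => ?_
    change succPerm ρ' (Fin.castLE hmn i).castSucc = _
    rw [succPerm_castSucc, hρ', hρ]
    rfl

noncomputable def injMap {m n : ℕ} (f : InjCat.of m ⟶ InjCat.of n) :
    A.X.obj (PermCat.of m) ⟶ A.X.obj (PermCat.of n) :=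
  A.stab (Fin.le_of_injective f.1 f.2) ≫
    A.X.map (permHom (Fin.exists_perm_apply_castLE (Fin.le_of_injective f.1 f.2) f.2).choose)

lemma injMap_eq {m n : ℕ} (f : InjCat.of m ⟶ InjCat.of n) (h : m ≤ n) {σ : Perm (Fin n)}
    (hσ : ∀ i, σ (Fin.castLE h i) = f.1 i) : A.injMap f = A.stab h ≫ A.X.map (permHom σ) :=
  A.stab_comp_map_eq h fun i =>
    ((Fin.exists_perm_apply_castLE h f.2).choose_spec i).trans (hσ i).symm

lemma injMap_id (m : ℕ) : A.injMap (𝟙 (InjCat.of m)) = 𝟙 _ := by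
  rw [A.injMap_eq _ le_rfl (σ := 1) fun _ => rfl, stab_refl, permHom_one, A.X.map_id,
    Category.comp_id]

lemma injMap_comp {l m n : ℕ} (f : InjCat.of l ⟶ InjCat.of m) (g : InjCat.of m ⟶ InjCat.of n) :
    A.injMap (f ≫ g) = A.injMap f ≫ A.injMap g := by
  have h₁ : l ≤ m := Fin.le_of_injective f.1 f.2
  have h₂ : m ≤ n := Fin.le_of_injective g.1 g.2
  obtain ⟨σ, hσ⟩ := Fin.exists_perm_apply_castLE h₁ f.2
  obtain ⟨ρ, hρ⟩ := Fin.exists_perm_apply_castLE h₂ g.2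
  obtain ⟨σ', hσ'⟩ := Fin.exists_perm_apply_castLE h₂
    ((Fin.castLE_injective h₂).comp σ.injective)
  rw [A.injMap_eq f h₁ hσ, A.injMap_eq g h₂ hρ, Category.assoc,
    reassoc_of% A.map_comp_stab h₂ σ hσ', ← A.X.map_comp, ← permHom_mul, ← Category.assoc,
    stab_comp_stab]
  refine A.injMap_eq _ _ fun i => ?_
  rw [Perm.mul_apply, ← Fin.castLE_castLE h₁ h₂, hσ', Function.comp_apply, hσ]
  exact hρ _

noncomputable def toInjFunctor : InjCat ⥤ TopCat.{u} where
  obj n := A.X.obj (PermCat.of n)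
  map f := A.injMap f
  map_id := A.injMap_id
  map_comp := A.injMap_comp

lemma injMap_permToInj {p q : ℕ} (f : PermCat.of p ⟶ PermCat.of q) :
    A.injMap (permToInj.map f) = A.X.map f := by
  obtain rfl : p = q :=
    Nat.le_antisymm (Fin.le_of_injective _ f.2.injective) (Fin.le_of_surjective _ f.2.surjective)
  refine (A.injMap_eq (m := p) (n := p) _ le_rfl (σ := Equiv.ofBijective f.1 f.2)
    fun _ => rfl).trans ?_
  rw [stab_refl, Category.id_comp]
  rfl

lemma injMap_iota (n : ℕ) : A.injMap (iota n) = A.s n := by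
  rw [A.injMap_eq _ (Nat.le_add_right n 1) (σ := 1) fun _ => rfl, stab_succ, permHom_one,
    A.X.map_id, Category.comp_id]

noncomputable def restrictToInjFunctorIso : restrictFunctor.obj A.toInjFunctor ≅ A :=
  isoMk (NatIso.ofComponents (fun p => Iso.refl (A.X.obj p)) fun f => by
      erw [Category.comp_id, Category.id_comp]
      exact A.injMap_permToInj f)
    fun n => by
      erw [Category.comp_id, Category.id_comp]
      exact A.injMap_iota n

end MObj

lemma MHom.iterMap_comm {A B : MObj.{u}} (φ : A ⟶ B) (m : ℕ) :
    ∀ k, iterMap A.X A.s m k ≫ φ.α.app (PermCat.of (m + k)) =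
      φ.α.app (PermCat.of m) ≫ iterMap B.X B.s m k
  | 0 => (Category.id_comp _).trans (Category.comp_id _).symm
  | k + 1 => by
    rw [iterMap, iterMap, Category.assoc]
    erw [φ.comm (m + k)]
    rw [reassoc_of% MHom.iterMap_comm φ m k]

lemma restrictFunctor_hom_naturality {F G : InjCat ⥤ TopCat.{u}}
    (φ : restrictFunctor.obj F ⟶ restrictFunctor.obj G) {m n : ℕ}
    (f : InjCat.of m ⟶ InjCat.of n) :
    F.map f ≫ φ.α.app (PermCat.of n) = φ.α.app (PermCat.of m) ≫ G.map f := by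
  obtain ⟨k, rfl⟩ := Nat.exists_eq_add_of_le (Fin.le_of_injective f.1 f.2)
  obtain ⟨σ, hσ⟩ := Fin.exists_perm_apply_castLE (Nat.le_add_right m k) f.2
  obtain rfl : f = iotaMany m k ≫ permToInj.map (permHom σ) :=
    Subtype.ext (funext fun i => (hσ i).symm)
  have hι := φ.iterMap_comm m k
  erw [iterMap_restrict, iterMap_restrict] at hι
  erw [F.map_comp, G.map_comp, Category.assoc, φ.α.naturality (permHom σ), reassoc_of% hι]
  rfl

def fullyFaithfulRestrictFunctor : (restrictFunctor.{u}).FullyFaithful where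
  preimage φ :=
    { app n := φ.α.app (PermCat.of n)
      naturality _ _ := restrictFunctor_hom_naturality φ }
  map_preimage _ := rfl
  preimage_map _ := rfl

theorem injCat_functors_equivalent_to_M :
    restrictFunctor.{u}.IsEquivalence :=
  { faithful := fullyFaithfulRestrictFunctor.faithful
    full := fullyFaithfulRestrictFunctor.full
    essSurj := ⟨fun A => ⟨A.toInjFunctor, ⟨A.restrictToInjFunctorIso⟩⟩⟩ }
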